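/- Let X, Y be chains, X' ⊆ X with |X'| ≥ 3 and Y' ⊆ Y with |Y'| ≥ 3. Then T_OP(X, X') ≅ T_OP(Y, Y') (as semigroups) if and only if there exists an order-isomorphism or order-anti-isomorphism θ : X → Y with θ(X') = Y'. -/

import Mathlib

open Set Function

/-- The semigroup of order-preserving self-maps of `X` with range contained in `X'`. -/
def OPR {X : Type*} [LinearOrder X] (X' : Set X) : Set (X → X) :=
  {f | Monotone f ∧ Set.range f ⊆ X'}

/-- `φ` is a semigroup isomorphism from `T_OP(X, X')` onto `T_OP(Y, Y')`
(composition written left-to-right: `f * g = g ∘ f`). -/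
def IsSgIso {X Y : Type*} [LinearOrder X] [LinearOrder Y] (X' : Set X) (Y' : Set Y)
    (φ : (X → X) → (Y → Y)) : Prop :=
  Set.BijOn φ (OPR X') (OPR Y') ∧
    ∀ f ∈ OPR X', ∀ g ∈ OPR X', φ (g ∘ f) = φ g ∘ φ f

/-!
An isomorphism `φ` maps the constants, which are the right zeros of `T_OP(X, X')`, to constants;
this gives a bijection `θ : X' → Y'` with `φ f (θ a) = θ (f a)`. Replacing `Y` by its dual if
necessary, `θ p < θ q` for a fixed pair `p < q` in `X'`. A cut (lower set) `A` of `X` is encoded by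
the two-step map with value `p` on `A` and `q` off `A`; its image under `φ` is a two-step map with
values `θ p < θ q`, whose lower level set is a cut of `Y`. This is an isomorphism between the chains
of cuts, monotone because of three-step maps (which need `|X'| ≥ 3`). In a chain the covering pairs
of cuts are exactly the pairs `Iio x ⋖ Iic x`, so the isomorphism of cuts is induced by an order
isomorphism `e : X ≃o Y`, and `e` extends `θ`. Conversely, conjugation by an order isomorphism or
anti-isomorphism is an isomorphism of the semigroups.
-/

section StepMap

variable {X : Type*}

open Classical in
noncomputable def stepMap (A : Set X) (p q : X) (x : X) : X := if x ∈ A then p else q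

variable {A : Set X} {p q x : X}

lemma stepMap_of_mem (hx : x ∈ A) : stepMap A p q x = p := if_pos hx

lemma stepMap_of_notMem (hx : x ∉ A) : stepMap A p q x = q := if_neg hx

lemma stepMap_comp (C : Set X) (p q : X) (k : X → X) :
    stepMap C p q ∘ k = stepMap (k ⁻¹' C) p q :=
  rfl

lemma range_stepMap_subset : range (stepMap A p q) ⊆ {p, q} := by
  rintro _ ⟨x, rfl⟩
  by_cases hx : x ∈ A
  · simp [stepMap_of_mem hx]
  · simp [stepMap_of_notMem hx]

lemma preimage_stepMap_singleton (hpq : p ≠ q) : stepMap A p q ⁻¹' {p} = A := by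
  ext x
  by_cases hx : x ∈ A
  · simp [stepMap_of_mem hx, hx]
  · simp [stepMap_of_notMem hx, hx, hpq.symm]

lemma eq_stepMap_of_range_subset {f : X → X} (hf : range f ⊆ {p, q}) :
    f = stepMap (f ⁻¹' {p}) p q := by
  funext x
  by_cases hx : f x = p
  · rw [stepMap_of_mem (show x ∈ f ⁻¹' {p} from hx), hx]
  · rw [stepMap_of_notMem (show x ∉ f ⁻¹' {p} from hx)]
    exact (hf (mem_range_self x)).resolve_left hx

variable [LinearOrder X]

lemma monotone_stepMap (hA : IsLowerSet A) (hpq : p ≤ q) : Monotone (stepMap A p q) := by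
  intro x y hxy
  by_cases hy : y ∈ A
  · rw [stepMap_of_mem (hA hxy hy), stepMap_of_mem hy]
  · by_cases hx : x ∈ A
    · rwa [stepMap_of_mem hx, stepMap_of_notMem hy]
    · rw [stepMap_of_notMem hx, stepMap_of_notMem hy]

lemma preimage_stepMap_Iic {r : X} (hpr : p ≤ r) (hrq : r < q) :
    stepMap A p q ⁻¹' Iic r = A := by
  ext x
  by_cases hx : x ∈ A
  · simp [stepMap_of_mem hx, hx, hpr]
  · simp [stepMap_of_notMem hx, hx, hrq]

end StepMap

section OPR

variable {X Y : Type*} [LinearOrder X] [LinearOrder Y] {X' : Set X} {Y' : Set Y}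

lemma apply_mem_of_mem_OPR {f : X → X} (hf : f ∈ OPR X') (x : X) : f x ∈ X' :=
  hf.2 (mem_range_self x)

lemma comp_mem_OPR {f g : X → X} (hf : f ∈ OPR X') (hg : g ∈ OPR X') : g ∘ f ∈ OPR X' :=
  ⟨hg.1.comp hf.1, range_subset_iff.2 fun x => apply_mem_of_mem_OPR hg (f x)⟩

lemma const_mem_OPR {a : X} (ha : a ∈ X') : const X a ∈ OPR X' :=
  ⟨monotone_const, range_subset_iff.2 fun _ => ha⟩

lemma stepMap_mem_OPR {A : Set X} {p q : X} (hA : IsLowerSet A) (hp : p ∈ X') (hq : q ∈ X')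
    (hpq : p ≤ q) : stepMap A p q ∈ OPR X' :=
  ⟨monotone_stepMap hA hpq,
    range_stepMap_subset.trans (insert_subset hp (singleton_subset_iff.2 hq))⟩

lemma OPR_orderDual (X' : Set X) : OPR (X := Xᵒᵈ) X' = OPR X' := by
  ext f
  exact and_congr_left' ⟨fun h _ _ hab => h hab, fun h _ _ hab => h hab⟩

lemma isSgIso_orderDual_iff {φ : (X → X) → (Y → Y)} :
    IsSgIso (Y := Yᵒᵈ) X' Y' φ ↔ IsSgIso X' Y' φ := by
  unfold IsSgIso
  rw [OPR_orderDual]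
  rfl

lemma conj_mem_OPR (e : X ≃o Y) (he : e '' X' = Y') {f : X → X} (hf : f ∈ OPR X') :
    e ∘ f ∘ e.symm ∈ OPR Y' := by
  refine ⟨e.monotone.comp (hf.1.comp e.symm.monotone), ?_⟩
  rw [← he, range_comp]
  exact image_mono (range_comp_subset_range _ f |>.trans hf.2)

lemma isSgIso_conj (e : X ≃o Y) (he : e '' X' = Y') :
    IsSgIso X' Y' (fun f => e ∘ f ∘ e.symm) := by
  have he' : e.symm '' Y' = X' := by rw [← he, OrderIso.symm_image_image]
  have hinv : InvOn (fun g => e.symm ∘ g ∘ e) (fun f => e ∘ f ∘ e.symm) (OPR X') (OPR Y') :=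
    ⟨fun f _ => by ext; simp, fun g _ => by ext; simp⟩
  refine ⟨hinv.bijOn (fun f => conj_mem_OPR e he) fun g => ?_, fun f _ g _ => ?_⟩
  · simpa using conj_mem_OPR e.symm he'
  · ext; simp

end OPR

section Iso

variable {X Y : Type*} [LinearOrder X] [LinearOrder Y] {X' : Set X} {Y' : Set Y}
  {φ : (X → X) → (Y → Y)}

lemma IsSgIso.exists_inverse (h : IsSgIso X' Y' φ) :
    ∃ ψ, IsSgIso Y' X' ψ ∧ InvOn ψ φ (OPR X') (OPR Y') := by
  have : Nonempty (X → X) := ⟨id⟩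
  have hinv := h.1.invOn_invFunOn
  have hbij := h.1.symm hinv.symm
  refine ⟨invFunOn φ (OPR X'), ⟨hbij, fun F hF G hG => ?_⟩, hinv⟩
  set ψ := invFunOn φ (OPR X')
  calc ψ (G ∘ F) = ψ (φ (ψ G ∘ ψ F)) := by
        rw [h.2 _ (hbij.mapsTo hF) _ (hbij.mapsTo hG), hinv.2 hF, hinv.2 hG]
    _ = ψ G ∘ ψ F := hinv.1 (comp_mem_OPR (hbij.mapsTo hF) (hbij.mapsTo hG))

lemma IsSgIso.map_const (h : IsSgIso X' Y' φ) {a : X} (ha : a ∈ X') {y : Y} (hy : y ∈ Y') :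
    φ (const X a) = const Y (φ (const X a) y) := by
  obtain ⟨g, hg, hgy⟩ := h.1.surjOn (const_mem_OPR hy)
  calc φ (const X a) = φ (const X a ∘ g) := rfl
    _ = φ (const X a) ∘ const Y y := by rw [h.2 g hg _ (const_mem_OPR ha), hgy]
    _ = const Y (φ (const X a) y) := comp_const

structure IsSgIsoWith (X' : Set X) (Y' : Set Y) (φ : (X → X) → (Y → Y)) (θ : X → Y) : Prop where
  isSgIso : IsSgIso X' Y' φ
  bijOn : BijOn θ X' Y'
  map_apply : ∀ f ∈ OPR X', ∀ a ∈ X', φ f (θ a) = θ (f a)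

lemma IsSgIso.exists_isSgIsoWith (h : IsSgIso X' Y' φ) (hX' : X'.Nonempty) (hY' : Y'.Nonempty) :
    ∃ θ, IsSgIsoWith X' Y' φ θ := by
  obtain ⟨x₀, hx₀⟩ := hX'
  obtain ⟨y₀, hy₀⟩ := hY'
  obtain ⟨ψ, hψ, hinv⟩ := h.exists_inverse
  let θ (a : X) : Y := φ (const X a) y₀
  have hconst : ∀ a ∈ X', φ (const X a) = const Y (θ a) := fun a ha => h.map_const ha hy₀
  have hmaps : MapsTo θ X' Y' := fun a ha =>
    apply_mem_of_mem_OPR (h.1.mapsTo (const_mem_OPR ha)) y₀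
  have hinj : InjOn θ X' := fun a ha a' ha' haa' => by
    have := h.1.injOn (const_mem_OPR ha) (const_mem_OPR ha')
      (by rw [hconst a ha, hconst a' ha', haa'])
    exact congrFun this x₀
  have hsurj : SurjOn θ X' Y' := fun b hb => by
    refine ⟨_, apply_mem_of_mem_OPR (hψ.1.mapsTo (const_mem_OPR hb)) x₀, ?_⟩
    show φ (const X _) y₀ = b
    rw [← hψ.map_const hb hx₀, hinv.2 (const_mem_OPR hb), const_apply]
  refine ⟨θ, h, ⟨hmaps, hinj, hsurj⟩, fun f hf a ha => ?_⟩
  show φ f (φ (const X a) y₀) = φ (const X (f a)) y₀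
  rw [← comp_apply (f := φ f), ← h.2 _ (const_mem_OPR ha) f hf]
  rfl

lemma IsSgIsoWith.exists_symm [Nonempty X] {θ : X → Y} (h : IsSgIsoWith X' Y' φ θ) :
    ∃ ψ ρ, IsSgIsoWith Y' X' ψ ρ ∧ InvOn ψ φ (OPR X') (OPR Y') ∧ LeftInvOn ρ θ X' := by
  obtain ⟨ψ, hψ, hinv⟩ := h.isSgIso.exists_inverse
  have hρ := h.bijOn.invOn_invFunOn
  refine ⟨ψ, invFunOn θ X', ⟨hψ, h.bijOn.symm hρ.symm, fun g hg b hb => ?_⟩, hinv, hρ.1⟩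
  obtain ⟨a, ha, rfl⟩ := h.bijOn.surjOn hb
  have hf := hψ.1.mapsTo hg
  rw [hρ.1 ha]
  conv_rhs => rw [← hinv.2 hg, h.map_apply _ hf a ha, hρ.1 (apply_mem_of_mem_OPR hf a)]

end Iso

section CutMap

variable {X Y : Type*} [LinearOrder X] [LinearOrder Y] {X' : Set X} {Y' : Set Y}

def cutMap (φ : (X → X) → (Y → Y)) (θ : X → Y) (p q : X) (A : Set X) : Set Y :=
  φ (stepMap A p q) ⁻¹' {θ p}

namespace IsSgIsoWith

variable {φ : (X → X) → (Y → Y)} {θ : X → Y} (h : IsSgIsoWith X' Y' φ θ)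
  {A : Set X} {p q : X}
include h

/-- Every value of `φ f` is a fixed point of `φ g`, and the fixed points of `φ g` in `Y'` are the
`θ`-images of those of `g`. -/
lemma range_map_subset {f g : X → X} (hf : f ∈ OPR X') (hg : g ∈ OPR X') (hgf : g ∘ f = f) :
    range (φ f) ⊆ θ '' range g := by
  rintro _ ⟨z, rfl⟩
  obtain ⟨a, ha, hay⟩ := h.bijOn.surjOn (apply_mem_of_mem_OPR (h.isSgIso.1.mapsTo hf) z)
  have hfix : φ g (φ f z) = φ f z := by
    rw [← comp_apply (f := φ g), ← h.isSgIso.2 f hf g hg, hgf]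
  rw [← hay, h.map_apply g hg a ha] at hfix
  exact ⟨a, ⟨a, h.bijOn.injOn (apply_mem_of_mem_OPR hg a) ha hfix⟩, hay⟩

variable (hp : p ∈ X') (hq : q ∈ X') (hpq : p < q)
include hp hq hpq

lemma range_map_stepMap_subset (hA : IsLowerSet A) :
    range (φ (stepMap A p q)) ⊆ {θ p, θ q} := by
  have hfix : stepMap (Iic p) p q ∘ stepMap A p q = stepMap A p q := by
    rw [stepMap_comp, preimage_stepMap_Iic le_rfl hpq]
  refine (h.range_map_subset (stepMap_mem_OPR hA hp hq hpq.le)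
    (stepMap_mem_OPR (isLowerSet_Iic p) hp hq hpq.le) hfix).trans ?_
  rw [← image_pair]
  exact image_mono range_stepMap_subset

lemma map_stepMap (hA : IsLowerSet A) :
    φ (stepMap A p q) = stepMap (cutMap φ θ p q A) (θ p) (θ q) :=
  eq_stepMap_of_range_subset (h.range_map_stepMap_subset hp hq hpq hA)

lemma mem_cutMap_iff (hA : IsLowerSet A) {s : X} (hs : s ∈ X') :
    θ s ∈ cutMap φ θ p q A ↔ s ∈ A := by
  have hf := stepMap_mem_OPR hA hp hq hpq.le
  rw [cutMap, mem_preimage, mem_singleton_iff, h.map_apply _ hf s hs,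
    h.bijOn.injOn.eq_iff (apply_mem_of_mem_OPR hf s) hp]
  by_cases hsA : s ∈ A
  · simp [stepMap_of_mem hsA, hsA]
  · simp [stepMap_of_notMem hsA, hsA, hpq.ne']

lemma isLowerSet_cutMap (hθ : θ p < θ q) (hA : IsLowerSet A) :
    IsLowerSet (cutMap φ θ p q A) := by
  intro y y' hy'y hy
  have hle : φ (stepMap A p q) y' ≤ θ p :=
    (h.isSgIso.1.mapsTo (stepMap_mem_OPR hA hp hq hpq.le)).1 hy'y |>.trans_eq hy
  rcases h.range_map_stepMap_subset hp hq hpq hA (mem_range_self y') with h' | h'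
  · exact h'
  · exact absurd (h' ▸ hle) hθ.not_ge

lemma cutMap_preimage {k : X → X} (hk : k ∈ OPR X') {C : Set X} (hC : IsLowerSet C) :
    cutMap φ θ p q (k ⁻¹' C) = φ k ⁻¹' cutMap φ θ p q C := by
  rw [cutMap, ← stepMap_comp, h.isSgIso.2 k hk _ (stepMap_mem_OPR hC hp hq hpq.le)]
  rfl

lemma cutMap_cutMap {ψ : (Y → Y) → (X → X)} {ρ : Y → X} (hψ : LeftInvOn ψ φ (OPR X'))
    (hρ : ρ (θ p) = p) (hA : IsLowerSet A) :
    cutMap ψ ρ (θ p) (θ q) (cutMap φ θ p q A) = A := by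
  rw [cutMap, ← h.map_stepMap hp hq hpq hA, hψ (stepMap_mem_OPR hA hp hq hpq.le), hρ,
    preimage_stepMap_singleton hpq.ne]

/-- This is where the third point `c` is used: the three-step map `k` has `A = k⁻¹' Iic p` and
`A' = k⁻¹' Iic q`, so the inclusion is pulled back from the one for `Iic p ⊆ Iic q`. -/
lemma cutMap_mono (hθ : θ p < θ q) {c : X} (hc : c ∈ X') (hqc : q < c) {A A' : Set X}
    (hA : IsLowerSet A) (hA' : IsLowerSet A') (hAA' : A ⊆ A') :
    cutMap φ θ p q A ⊆ cutMap φ θ p q A' := by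
  have hIic : cutMap φ θ p q (Iic p) ⊆ cutMap φ θ p q (Iic q) := by
    refine ((h.isLowerSet_cutMap hp hq hpq hθ (isLowerSet_Iic p)).total
      (h.isLowerSet_cutMap hp hq hpq hθ (isLowerSet_Iic q))).resolve_right fun hqp => ?_
    have := hqp ((h.mem_cutMap_iff hp hq hpq (isLowerSet_Iic q) hq).2 le_rfl)
    exact hpq.not_ge ((h.mem_cutMap_iff hp hq hpq (isLowerSet_Iic p) hq).1 this)
  let k : X → X := fun x => min (stepMap A p c x) (stepMap A' q c x)
  have hk : k ∈ OPR X' := by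
    refine ⟨(monotone_stepMap hA (hpq.trans hqc).le).min (monotone_stepMap hA' hqc.le),
      range_subset_iff.2 fun x => ?_⟩
    rcases min_choice (stepMap A p c x) (stepMap A' q c x) with hx | hx <;> simp only [k, hx]
    · exact apply_mem_of_mem_OPR (stepMap_mem_OPR hA hp hc (hpq.trans hqc).le) x
    · exact apply_mem_of_mem_OPR (stepMap_mem_OPR hA' hq hc hqc.le) x
  have hkp : k ⁻¹' Iic p = A := by
    ext x
    by_cases hx : x ∈ A
    · simp [k, stepMap, hx, hAA' hx]
    · by_cases hx' : x ∈ A' <;> simp [k, stepMap, hx, hx', hpq, hpq.trans hqc]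
  have hkq : k ⁻¹' Iic q = A' := by
    ext x
    by_cases hx : x ∈ A
    · simp [k, stepMap, hx, hAA' hx, hpq.le]
    · by_cases hx' : x ∈ A' <;> simp [k, stepMap, hx, hx', hqc]
  rw [← hkp, ← hkq, h.cutMap_preimage hp hq hpq hk (isLowerSet_Iic p),
    h.cutMap_preimage hp hq hpq hk (isLowerSet_Iic q)]
  exact preimage_mono hIic

end IsSgIsoWith

end CutMap

namespace LowerSet

variable {α β : Type*}

lemma Iio_covBy_Iic [PartialOrder α] (a : α) : Iio a ⋖ Iic a := by
  refine ⟨coe_ssubset_coe.1 Set.Iio_ssubset_Iic_self, fun s has hsa => ?_⟩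
  obtain ⟨x, hxs, hxa⟩ := exists_of_ssubset (coe_ssubset_coe.2 has)
  have hx : x = a := (hsa.le hxs).eq_of_not_lt hxa
  exact hsa.not_ge (Iic_le.2 (hx ▸ hxs))

lemma exists_eq_Iio_Iic_of_covBy [LinearOrder α] {s t : LowerSet α} (hst : s ⋖ t) :
    ∃ a, s = Iio a ∧ t = Iic a := by
  obtain ⟨a, hat, has⟩ := exists_of_ssubset (coe_ssubset_coe.2 hst.lt)
  have hsa : s ≤ Iio a := fun x hx => lt_of_not_ge fun hax => has (s.lower hax hx)
  have hat' : Iic a ≤ t := Iic_le.2 hat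
  refine ⟨a, ((hst.eq_or_eq hsa ((Iio_covBy_Iic a).le.trans hat')).resolve_right
    ((Iio_covBy_Iic a).lt.trans_le hat').ne).symm, ?_⟩
  exact ((hst.eq_or_eq (hsa.trans (Iio_covBy_Iic a).le) hat').resolve_left
    fun h => has (h ▸ le_rfl)).symm

variable [LinearOrder α] [LinearOrder β]

lemma _root_.OrderIso.exists_map_Iio_Iic (T : LowerSet α ≃o LowerSet β) (a : α) :
    ∃ b, T (Iio a) = Iio b ∧ T (Iic a) = Iic b :=
  exists_eq_Iio_Iic_of_covBy ((apply_covBy_apply_iff T).2 (Iio_covBy_Iic a))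

lemma _root_.OrderIso.exists_orderIso_map_Iio_Iic (T : LowerSet α ≃o LowerSet β) :
    ∃ e : α ≃o β, ∀ a, T (Iio a) = Iio (e a) ∧ T (Iic a) = Iic (e a) := by
  choose f hf using T.exists_map_Iio_Iic
  have hmono : StrictMono f := fun a a' haa' => by
    have := T.strictMono (Iic_strictMono α haa')
    rwa [(hf a).2, (hf a').2, (Iic_strictMono β).lt_iff_lt] at this
  have hsurj : Surjective f := fun b => by
    obtain ⟨a, -, ha⟩ := T.symm.exists_map_Iio_Iic b
    exact ⟨a, Iic_injective (by rw [← (hf a).2, ← ha, T.apply_symm_apply])⟩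
  exact ⟨StrictMono.orderIsoOfSurjective f hmono hsurj, hf⟩

end LowerSet

lemma exists_lt_lt_of_three_le_mk {X : Type*} [LinearOrder X] {X' : Set X}
    (h : 3 ≤ Cardinal.mk X') : ∃ a ∈ X', ∃ b ∈ X', ∃ c ∈ X', a < b ∧ b < c := by
  obtain ⟨s, hs⟩ := Cardinal.exists_finset_eq_card h
  let f := s.orderEmbOfFin hs.symm
  exact ⟨f 0, (f 0).2, f 1, (f 1).2, f 2, (f 2).2, f.strictMono (by decide),
    f.strictMono (by decide)⟩

section Main

variable {X Y : Type*} [LinearOrder X] [LinearOrder Y] {X' : Set X} {Y' : Set Y}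
  {φ : (X → X) → (Y → Y)} {θ : X → Y}

namespace IsSgIsoWith

variable (h : IsSgIsoWith X' Y' φ θ) {p q c : X} (hp : p ∈ X') (hq : q ∈ X') (hc : c ∈ X')
  (hpq : p < q) (hqc : q < c) (hθ : θ p < θ q)
include h hp hq hc hpq hqc hθ

lemma exists_lowerSetIso :
    ∃ T : LowerSet X ≃o LowerSet Y, ∀ A : LowerSet X, ∀ s ∈ X', θ s ∈ T A ↔ s ∈ A := by
  have : Nonempty X := ⟨p⟩
  obtain ⟨ψ, ρ, hψ, hinv, hρ⟩ := h.exists_symm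
  have hθp := h.bijOn.mapsTo hp
  have hθq := h.bijOn.mapsTo hq
  have hρp : ρ (θ p) = p := hρ hp
  have hρq : ρ (θ q) = q := hρ hq
  let T (A : LowerSet X) : LowerSet Y :=
    ⟨cutMap φ θ p q A, h.isLowerSet_cutMap hp hq hpq hθ A.lower⟩
  let T' (B : LowerSet Y) : LowerSet X :=
    ⟨cutMap ψ ρ (θ p) (θ q) B, hψ.isLowerSet_cutMap hθp hθq hθ (by rwa [hρp, hρq]) B.lower⟩
  have hleft : LeftInverse T' T := fun A =>
    SetLike.coe_injective (h.cutMap_cutMap hp hq hpq hinv.1 hρp A.lower)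
  have hright : RightInverse T' T := fun B => SetLike.coe_injective <| by
    have := hψ.cutMap_cutMap hθp hθq hθ hinv.2 (by rw [hρp]) B.lower
    rwa [hρp, hρq] at this
  have hmono : Monotone T := fun A A' hAA' =>
    h.cutMap_mono hp hq hpq hθ hc hqc A.lower A'.lower hAA'
  exact ⟨StrictMono.orderIsoOfSurjective T (hmono.strictMono_of_injective hleft.injective)
    hright.surjective, fun A s hs => h.mem_cutMap_iff hp hq hpq A.lower hs⟩

/-- `e` agrees with `θ` on `X'`, since `θ s` lies in the cut attached to `Iic s` but not in the
one attached to `Iio s`. -/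
lemma exists_orderIso : ∃ e : X ≃o Y, e '' X' = Y' := by
  obtain ⟨T, hT⟩ := h.exists_lowerSetIso hp hq hc hpq hqc hθ
  obtain ⟨e, he⟩ := T.exists_orderIso_map_Iio_Iic
  have heθ : EqOn e θ X' := fun s hs => by
    have hIic := (hT (LowerSet.Iic s) s hs).2 le_rfl
    have hIio := (hT (LowerSet.Iio s) s hs).not.2 (lt_irrefl s)
    rw [(he s).2] at hIic
    rw [(he s).1] at hIio
    exact le_antisymm (not_lt.1 hIio) hIic
  exact ⟨e, (image_congr heθ).trans h.bijOn.image_eq⟩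

end IsSgIsoWith

lemma IsSgIsoWith.orderDual (h : IsSgIsoWith X' Y' φ θ) : IsSgIsoWith (Y := Yᵒᵈ) X' Y' φ θ :=
  ⟨isSgIso_orderDual_iff.2 h.isSgIso, h.bijOn, h.map_apply⟩

lemma IsSgIso.exists_orderIso_or_orderIso_dual (h : IsSgIso X' Y' φ) (h3X : 3 ≤ Cardinal.mk X')
    (hY' : Y'.Nonempty) :
    (∃ e : X ≃o Y, e '' X' = Y') ∨ ∃ e : X ≃o Yᵒᵈ, e '' X' = Y' := by
  obtain ⟨p, hp, q, hq, c, hc, hpq, hqc⟩ := exists_lt_lt_of_three_le_mk h3X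
  obtain ⟨θ, hθ⟩ := h.exists_isSgIsoWith ⟨p, hp⟩ hY'
  rcases lt_or_gt_of_ne (hθ.bijOn.injOn.ne hp hq hpq.ne) with hlt | hgt
  · exact .inl (hθ.exists_orderIso hp hq hc hpq hqc hlt)
  · exact .inr (hθ.orderDual.exists_orderIso hp hq hc hpq hqc hgt)

end Main

/-- main theorem: for `|X'| ≥ 3` and `|Y'| ≥ 3`,
`T_OP(X, X') ≅ T_OP(Y, Y')` iff there is an order-(anti)-isomorphism `θ : X → Y`
with `θ(X') = Y'`. -/
theorem stmt_19 {X Y : Type*} [LinearOrder X] [LinearOrder Y]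
    (X' : Set X) (Y' : Set Y)
    (h3X : 3 ≤ Cardinal.mk ↥X') (h3Y : 3 ≤ Cardinal.mk ↥Y') :
    (∃ φ : (X → X) → (Y → Y), IsSgIso X' Y' φ) ↔
    ∃ θ : X ≃ Y,
      ((∀ a b : X, a ≤ b ↔ θ a ≤ θ b) ∨ (∀ a b : X, a ≤ b ↔ θ b ≤ θ a)) ∧
      θ '' X' = Y' := by
  constructor
  · rintro ⟨φ, hφ⟩
    obtain ⟨y, hy, -⟩ := exists_lt_lt_of_three_le_mk h3Y
    rcases hφ.exists_orderIso_or_orderIso_dual h3X ⟨y, hy⟩ with ⟨e, he⟩ | ⟨e, he⟩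
    · exact ⟨e.toEquiv, .inl fun a b => e.le_iff_le.symm, he⟩
    · exact ⟨e.toEquiv.trans OrderDual.ofDual, .inr fun a b => e.le_iff_le.symm, he⟩
  · rintro ⟨θ, hθ | hθ, himg⟩
    · exact ⟨_, isSgIso_conj ⟨θ, (hθ _ _).symm⟩ himg⟩
    · exact ⟨_, isSgIso_orderDual_iff.1
        (isSgIso_conj ⟨θ.trans OrderDual.toDual, (hθ _ _).symm⟩ himg)⟩
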